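/- If a category C has equalizers, then for a geometric morphism between Grothendieck toposes (an adjunction f* ⊣ f_* with f* preserving finite limits), the left adjoint f* is faithful if and only if it reflects isomorphisms, if and only if it reflects epimorphisms, if and only if it reflects monomorphisms. -/

import Mathlib

universe u

open CategoryTheory Limits

section Aux

variable {A : Type*} {B : Type*} [Category A] [Category B] (F : A ⥤ B)

theorem aux_faithful_of_reflectsIso [HasEqualizers A] [PreservesFiniteLimits F]
    [F.ReflectsIsomorphisms] : F.Faithful := by
  constructor
  intro X Y g h hgh
  have hl := isLimitOfHasEqualizerOfPreservesLimit F g h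
  have : IsIso (F.map (equalizer.ι g h)) :=
    isIso_limit_cone_parallelPair_of_eq hgh hl
  have : IsIso (equalizer.ι g h) := isIso_of_reflects_iso _ F
  rw [← cancel_epi (equalizer.ι g h)]
  exact equalizer.condition g h

theorem aux_faithful_of_reflectsEpi [HasEqualizers A] [Balanced A] [PreservesFiniteLimits F]
    [F.ReflectsEpimorphisms] : F.Faithful := by
  constructor
  intro X Y g h hgh
  have hl := isLimitOfHasEqualizerOfPreservesLimit F g h
  have : IsIso (F.map (equalizer.ι g h)) :=
    isIso_limit_cone_parallelPair_of_eq hgh hl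
  have hepi : Epi (equalizer.ι g h) := F.epi_of_epi_map inferInstance
  have : IsIso (equalizer.ι g h) := isIso_of_mono_of_epi _
  rw [← cancel_epi (equalizer.ι g h)]
  exact equalizer.condition g h

theorem aux_faithful_of_reflectsMono [HasCoequalizers A] [Balanced A]
    [PreservesColimitsOfShape WalkingParallelPair F]
    [F.ReflectsMonomorphisms] : F.Faithful := by
  constructor
  intro X Y g h hgh
  have hl := isColimitOfHasCoequalizerOfPreservesColimit F g h
  have : IsIso (F.map (coequalizer.π g h)) :=
    isIso_colimit_cocone_parallelPair_of_eq hgh hl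
  have hmono : Mono (coequalizer.π g h) := F.mono_of_mono_map inferInstance
  have : IsIso (coequalizer.π g h) := isIso_of_mono_of_epi _
  rw [← cancel_mono (coequalizer.π g h)]
  exact coequalizer.condition g h

end Aux

/-- For a geometric morphism between Grothendieck toposes (an adjunction `f* ⊣ f_*` with `f*`
preserving finite limits), the left adjoint `f*` is faithful iff it reflects isomorphisms,
iff it reflects epimorphisms, iff it reflects monomorphisms. -/
theorem stmt_16 {C D : Type u} [SmallCategory C] [SmallCategory D]
    (J : GrothendieckTopology C) (K : GrothendieckTopology D)
    (fStar : Sheaf K (Type u) ⥤ Sheaf J (Type u))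
    (fLower : Sheaf J (Type u) ⥤ Sheaf K (Type u))
    (adj : fStar ⊣ fLower) [PreservesFiniteLimits fStar] :
    (fStar.Faithful ↔ fStar.ReflectsIsomorphisms) ∧
      (fStar.Faithful ↔ fStar.ReflectsEpimorphisms) ∧
      (fStar.Faithful ↔ fStar.ReflectsMonomorphisms) := by
  have hcolim : PreservesColimitsOfShape WalkingParallelPair fStar :=
    (adj.leftAdjoint_preservesColimits).preservesColimitsOfShape
  refine ⟨⟨fun hf => ?_, fun hr => ?_⟩, ⟨fun hf => ?_, fun hr => ?_⟩,
    ⟨fun hf => ?_, fun hr => ?_⟩⟩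
  · -- Faithful → ReflectsIsomorphisms
    constructor
    intro X Y f hf'
    haveI := fStar.epi_of_epi_map (f := f) inferInstance
    haveI := fStar.mono_of_mono_map (f := f) inferInstance
    exact isIso_of_mono_of_epi f
  · exact aux_faithful_of_reflectsIso fStar
  · exact inferInstance
  · exact aux_faithful_of_reflectsEpi fStar
  · exact inferInstance
  · exact aux_faithful_of_reflectsMono fStar
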